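/- arXiv:1009.5664 — 2 statements merged into one kernel-verified Lean document; each statement's English description precedes it below -/
import Mathlib

section
/- Completeness Lemma. Let n ∈ ℕ and t ∈ [−1,1). Then the family (M_{n,q} : q ∈ Prob({0,1}²), q₀₁ − q₁₀ ≥ t) is complete in the sense of Lehmann–Scheffé; in particular, if g : {k ∈ ℕ₀^({0,1}²) : k₊₊ = n} → ℝ satisfies Σ_k M_{n,q}({k})·g(k) = 0 for every q ∈ Prob({0,1}²) with q₀₁ − q₁₀ ≥ t, then g(k) = 0 for every k with k₊₊ = n. -/
open scoped BigOperators

noncomputable section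

/-- `p` is a discrete probability density on the finite set `X`,
i.e. a function `X → [0,1]` summing to `1`. -/
def IsProb {X : Type*} [Fintype X] (p : X → ℝ) : Prop :=
  (∀ x, 0 ≤ p x ∧ p x ≤ 1) ∧ ∑ x, p x = 1

/-- `χ` is a Markov transition density: `χ x` is a probability density for each `x`. -/
def IsMarkov {X Y : Type*} [Fintype Y] (χ : X → Y → ℝ) : Prop :=
  ∀ x, IsProb (χ x)

/-- The mixture density `μ₁(π,χ)` on `{0,1}` (indices: `χ i j = χ_{j|i}`). -/
def mu1 (π : Fin 2 → ℝ) (χ : Fin 2 → Fin 2 → ℝ) : Fin 2 → ℝ :=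
  fun j => ∑ i, π i * χ i j

/-- The mixture density `μ₂(π,χ)` on `{0,1}²` (indices: `χ i j = χ_{j|i}`). -/
def mu2 (π : Fin 2 → ℝ) (χ : Fin 2 → Fin 2 × Fin 2 → ℝ) : Fin 2 × Fin 2 → ℝ :=
  fun j => ∑ i, π i * χ i j

/-- First-test characteristic: `chi1 χ i ι = χ^{(1)}_{ι|i} = χ_{ι0|i} + χ_{ι1|i}`. -/
def chi1 (χ : Fin 2 → Fin 2 × Fin 2 → ℝ) : Fin 2 → Fin 2 → ℝ :=
  fun i ι => χ i (ι, 0) + χ i (ι, 1)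

/-- Second-test characteristic: `chi2 χ i ι = χ^{(2)}_{ι|i} = χ_{0ι|i} + χ_{1ι|i}`. -/
def chi2 (χ : Fin 2 → Fin 2 × Fin 2 → ℝ) : Fin 2 → Fin 2 → ℝ :=
  fun i ι => χ i (0, ι) + χ i (1, ι)

/-- The multinomial point mass `M_{n,q}({k}) = n! ∏_x q_x^{k_x}/k_x!`. -/
def mPMF {X : Type*} [Fintype X] (n : ℕ) (q : X → ℝ) (k : X → ℕ) : ℝ :=
  (n.factorial : ℝ) * ∏ x, q x ^ k x / ((k x).factorial : ℝ)

/-- `mProb n q S` is the probability, under the multinomial distribution `M_{n,q}`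
(supported on `{k : Σ_x k_x = n}`), of the event `S`. -/
def mProb {X : Type*} [Fintype X] (n : ℕ) (q : X → ℝ) (S : Set (X → ℕ)) : ℝ :=
  ∑' k : X → ℕ, Set.indicator {k | (∑ x, k x) = n ∧ k ∈ S} (mPMF n q) k


/-!
The expectation `∑ₖ M_{n,q}({k}) g(k)` is a homogeneous polynomial of degree `n` in `q`, with
coefficients `n! / ∏ₓ kₓ! · g(k)`. By homogeneity it vanishes at every positive weight vector `v`
whose normalisation `v / ∑ v` lies in the region `q₀₁ - q₁₀ ≥ t`; since `t < 1`, these `v` contain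
a box with infinite sides (`v₀₁ > 1`, the other weights small). A polynomial vanishing on such a
box is zero, so every coefficient, and hence `g`, vanishes.
-/

open Finset MvPolynomial Nat

lemma coeff_eq_zero_of_sum_mul_prod_pow_eq_zero {σ R : Type*} [Fintype σ] [CommRing R] [IsDomain R]
    (T : Finset (σ → ℕ)) (c : (σ → ℕ) → R) (s : σ → Set R) (hs : ∀ i, (s i).Infinite)
    (h : ∀ v ∈ Set.univ.pi s, ∑ k ∈ T, c k * ∏ i, v i ^ k i = 0) :
    ∀ k ∈ T, c k = 0 := by
  classical
  let P : MvPolynomial σ R := ∑ k ∈ T, monomial (Finsupp.equivFunOnFinite.symm k) (c k)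
  have hP : P = 0 := funext_set s hs fun v hv => by
    simpa [P, eval_monomial, Finsupp.prod_fintype] using h v hv
  intro k hk
  simpa [P, coeff_sum, coeff_monomial, hk] using
    congr_arg (coeff (Finsupp.equivFunOnFinite.symm k)) hP

lemma mPMF_eq_mul_prod_pow {X : Type*} [Fintype X] (n : ℕ) (q : X → ℝ) (k : X → ℕ) :
    mPMF n q k = n ! / (∏ x, ((k x) ! : ℝ)) * ∏ x, q x ^ k x := by
  rw [mPMF, prod_div_distrib]
  ring

lemma tsum_indicator_mPMF_mul {X : Type*} [Fintype X] [DecidableEq X] (n : ℕ) (q : X → ℝ)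
    (g : (X → ℕ) → ℝ) :
    ∑' k, Set.indicator {k | ∑ x, k x = n} (fun k => mPMF n q k * g k) k =
      ∑ k ∈ piAntidiag univ n, n ! / (∏ x, ((k x) ! : ℝ)) * g k * ∏ x, q x ^ k x := by
  have hset : {k : X → ℕ | ∑ x, k x = n} = (piAntidiag univ n : Finset (X → ℕ)) := by ext; simp
  rw [hset, ← sum_eq_tsum_indicator]
  refine sum_congr rfl fun k _ => ?_
  rw [mPMF_eq_mul_prod_pow]
  ring

lemma sum_mul_prod_div_pow {X : Type*} [Fintype X] [DecidableEq X] (n : ℕ) (c : (X → ℕ) → ℝ)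
    (v : X → ℝ) (s : ℝ) :
    ∑ k ∈ piAntidiag univ n, c k * ∏ x, (v x / s) ^ k x =
      (∑ k ∈ piAntidiag univ n, c k * ∏ x, v x ^ k x) / s ^ n := by
  rw [sum_div]
  refine sum_congr rfl fun k hk => ?_
  simp only [div_pow, prod_div_distrib, prod_pow_eq_pow_sum, (mem_piAntidiag.mp hk).1,
    mul_div_assoc]

lemma isProb_div_sum {X : Type*} [Fintype X] (v : X → ℝ) (hv : ∀ x, 0 ≤ v x)
    (hs : 0 < ∑ x, v x) : IsProb fun x => v x / ∑ y, v y :=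
  ⟨fun x => ⟨div_nonneg (hv x) hs.le,
      (div_le_one hs).mpr (single_le_sum (fun y _ => hv y) (mem_univ x))⟩,
    by rw [← sum_div, div_self hs.ne']⟩

def weightBox (t : ℝ) : Fin 2 × Fin 2 → Set ℝ :=
  fun x => if x = (0, 1) then Set.Ioi 1 else Set.Ioo 0 ((1 - t) / 4)

lemma weightBox_infinite {t : ℝ} (ht : t < 1) (x : Fin 2 × Fin 2) : (weightBox t x).Infinite := by
  unfold weightBox
  split_ifs
  · exact Set.Ioi_infinite 1
  · exact Set.Ioo_infinite (by linarith)

lemma weightBox_pos {t : ℝ} {v : Fin 2 × Fin 2 → ℝ} (hv : v ∈ Set.univ.pi (weightBox t))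
    (x : Fin 2 × Fin 2) : 0 < v x := by
  have := hv x (Set.mem_univ x)
  unfold weightBox at this
  split_ifs at this
  · exact zero_lt_one.trans this
  · exact this.1

lemma le_sub_div_sum_of_mem_weightBox {t : ℝ} (ht : t < 1) {v : Fin 2 × Fin 2 → ℝ}
    (hv : v ∈ Set.univ.pi (weightBox t)) :
    t ≤ (v (0, 1) - v (1, 0)) / ∑ x, v x := by
  have hmem : ∀ x, v x ∈ weightBox t x := fun x => hv x (Set.mem_univ x)
  have h00 : v (0, 0) ∈ Set.Ioo 0 ((1 - t) / 4) := by simpa [weightBox] using hmem (0, 0)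
  have h01 : v (0, 1) ∈ Set.Ioi 1 := by simpa [weightBox] using hmem (0, 1)
  have h10 : v (1, 0) ∈ Set.Ioo 0 ((1 - t) / 4) := by simpa [weightBox] using hmem (1, 0)
  have h11 : v (1, 1) ∈ Set.Ioo 0 ((1 - t) / 4) := by simpa [weightBox] using hmem (1, 1)
  simp only [Set.mem_Ioo, Set.mem_Ioi] at h00 h01 h10 h11
  rw [Fintype.sum_prod_type, Fin.sum_univ_two, Fin.sum_univ_two, Fin.sum_univ_two,
    le_div_iff₀ (by linarith)]
  -- `(1 - t) v₀₁ > 1 - t` dominates `v₁₀ + t (v₀₀ + v₁₀ + v₁₁)`, each weight being `< (1 - t) / 4`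
  nlinarith

theorem stmt_18_general (n : ℕ) (t : ℝ) (ht : t ∈ Set.Ico (-1:ℝ) 1)
    (g : ((Fin 2 × Fin 2) → ℕ) → ℝ)
    (hg : ∀ q : Fin 2 × Fin 2 → ℝ, IsProb q → t ≤ q (0, 1) - q (1, 0) →
      (∑' k : (Fin 2 × Fin 2) → ℕ,
        Set.indicator {k | (∑ x, k x) = n} (fun k => mPMF n q k * g k) k) = 0) :
    ∀ k : (Fin 2 × Fin 2) → ℕ, (∑ x, k x) = n → g k = 0 := by
  set c : ((Fin 2 × Fin 2) → ℕ) → ℝ := fun k => n ! / (∏ x, ((k x) ! : ℝ)) * g k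
  have hvanish : ∀ v ∈ Set.univ.pi (weightBox t),
      ∑ k ∈ piAntidiag univ n, c k * ∏ x, v x ^ k x = 0 := by
    intro v hv
    have hs : 0 < ∑ x, v x := sum_pos (fun x _ => weightBox_pos hv x) univ_nonempty
    have hq := hg _ (isProb_div_sum v (fun x => (weightBox_pos hv x).le) hs)
      (by simpa only [sub_div] using le_sub_div_sum_of_mem_weightBox ht.2 hv)
    rw [tsum_indicator_mPMF_mul, sum_mul_prod_div_pow] at hq
    exact (div_eq_zero_iff.mp hq).resolve_right (pow_ne_zero n hs.ne')
  intro k hk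
  have hck := coeff_eq_zero_of_sum_mul_prod_pow_eq_zero _ c _ (weightBox_infinite ht.2) hvanish k
    (by simpa using hk)
  have hfactor : (n ! : ℝ) / ∏ x, ((k x) ! : ℝ) ≠ 0 := by positivity
  exact (mul_eq_zero.mp hck).resolve_left hfactor

/-- Completeness Lemma: the multinomial family restricted by `q₀₁ - q₁₀ ≥ t` is
complete in the sense of Lehmann–Scheffé: any statistic `g` with zero expectation
under every member of the family vanishes on `{k : k₊₊ = n}`. -/
theorem stmt_18 (n : ℕ) (hn : 0 < n) (t : ℝ) (ht : t ∈ Set.Ico (-1:ℝ) 1)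
    (g : ((Fin 2 × Fin 2) → ℕ) → ℝ)
    (hg : ∀ q : Fin 2 × Fin 2 → ℝ, IsProb q → t ≤ q (0, 1) - q (1, 0) →
      (∑' k : (Fin 2 × Fin 2) → ℕ,
        Set.indicator {k | (∑ x, k x) = n} (fun k => mPMF n q k * g k) k) = 0) :
    ∀ k : (Fin 2 × Fin 2) → ℕ, (∑ x, k x) = n → g k = 0 :=
  stmt_18_general n t ht g hg

end
end

section
/- Equivalence-implies-equality Lemma. Let β ∈ [0,1], n ∈ ℕ, and let Δ̲ and Δ̰ : {k ∈ ℕ₀^({0,1}²) : k₊₊ = n} → [−1,1] be two lower β-confidence bounds for the parameter q ↦ q₀₁ − q₁₀ in the multinomial model M = (M_{n,q} : q ∈ Prob({0,1}²)) that are equivalent, i.e. M_{n,q}(Δ̲ ≥ t) = M_{n,q}(Δ̰ ≥ t) for every q ∈ Prob({0,1}²) and every t < q₀₁ − q₁₀. Then Δ̲ = Δ̰. -/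
open scoped BigOperators

noncomputable section

/-!
Suppose `Δ₁ k < t < Δ₂ k ≤ 1`. Along the curve `q(s)_x ∝ s ^ a_x` with
`(a₀₀, a₀₁, a₁₀, a₁₁) = (1, 0, n + 1, (n + 1)²)` we have `q₀₁ - q₁₀ → 1` as `s → 0`, so the
equivalence applies to the threshold `t` for all small `s > 0`. Along this curve the probability
of an event `S` is `N(s)⁻ⁿ` times the polynomial `∑_{k ∈ S} multinomial(k) s^(∑ a_x k_x)`, and the
exponents `∑ a_x k_x` are distinct for distinct `k` because they are base-`(n + 1)` numerals.
Polynomials agreeing on an interval have the same coefficients, so the events `{t ≤ Δ₁}` and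
`{t ≤ Δ₂}` contain the same `k`, contradicting `Δ₁ k < t ≤ Δ₂ k`.
-/

open Finset Polynomial Filter Topology

theorem Polynomial.coeffs_eq_of_sum_mul_pow_eq {R ι : Type*} [CommRing R] [IsDomain R]
    {F : Finset ι} {e : ι → ℕ} (he : Set.InjOn e F) {c₁ c₂ : ι → R} {T : Set R}
    (hT : T.Infinite) (h : ∀ s ∈ T, ∑ k ∈ F, c₁ k * s ^ e k = ∑ k ∈ F, c₂ k * s ^ e k) :
    ∀ k ∈ F, c₁ k = c₂ k := by
  set P : (ι → R) → R[X] := fun c => ∑ k ∈ F, C (c k) * X ^ e k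
  have hcoeff : ∀ c, ∀ k ∈ F, (P c).coeff (e k) = c k := by
    intro c k hk
    rw [finsetSum_coeff, sum_eq_single_of_mem k hk, coeff_C_mul_X_pow, if_pos rfl]
    intro j hj hjk
    rw [coeff_C_mul_X_pow, if_neg fun hje => hjk (he hj hk hje.symm)]
  have hP : P c₁ = P c₂ := eq_of_infinite_eval_eq _ _ <| hT.mono fun s hs => by
    simpa [P, eval_finsetSum] using h s hs
  intro k hk
  rw [← hcoeff c₁ k hk, ← hcoeff c₂ k hk, hP]

section Multinomial

variable {X : Type*} [Fintype X]

theorem mPMF_eq_multinomial_mul_prod (n : ℕ) (q : X → ℝ) {k : X → ℕ} (hk : ∑ x, k x = n) :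
    mPMF n q k = Nat.multinomial univ k * ∏ x, q x ^ k x := by
  have hspec := congrArg (Nat.cast (R := ℝ)) (Nat.multinomial_spec univ k)
  push_cast at hspec
  rw [mPMF, prod_div_distrib, ← hk, ← hspec]
  field_simp [prod_ne_zero_iff.2 fun x _ => (Nat.factorial_pos (k x)).ne']

theorem mProb_eq_sum_piAntidiag [DecidableEq X] (n : ℕ) (q : X → ℝ) (S : Set (X → ℕ)) :
    mProb n q S = ∑ k ∈ piAntidiag univ n, S.indicator (mPMF n q) k := by
  rw [mProb, tsum_eq_sum (s := piAntidiag univ n)]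
  · refine sum_congr rfl fun k hk => ?_
    have hk : ∑ x, k x = n := by simpa using hk
    by_cases hS : k ∈ S
    · rw [Set.indicator_of_mem (by exact ⟨hk, hS⟩), Set.indicator_of_mem hS]
    · rw [Set.indicator_of_notMem (fun h => hS h.2), Set.indicator_of_notMem hS]
  · intro k hk
    exact Set.indicator_of_notMem (fun h => hk (by simpa using h.1)) _

theorem prod_monomial_div_pow (s N : ℝ) (a k : X → ℕ) :
    ∏ x, (s ^ a x / N) ^ k x = s ^ (∑ x, a x * k x) / N ^ (∑ x, k x) := by
  simp only [div_pow, prod_div_distrib, ← pow_mul, prod_pow_eq_pow_sum]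

theorem mProb_monomial_curve [DecidableEq X] (n : ℕ) (a : X → ℕ) (s N : ℝ) (S : Set (X → ℕ)) :
    mProb n (fun x => s ^ a x / N) S =
      (∑ k ∈ piAntidiag univ n,
        S.indicator (fun k => (Nat.multinomial univ k : ℝ)) k * s ^ (∑ x, a x * k x)) / N ^ n := by
  rw [mProb_eq_sum_piAntidiag, sum_div]
  refine sum_congr rfl fun k hk => ?_
  have hk : ∑ x, k x = n := by simpa using hk
  by_cases hS : k ∈ S
  · simp only [Set.indicator_of_mem hS, mPMF_eq_multinomial_mul_prod n _ hk,
      prod_monomial_div_pow, hk, mul_div_assoc]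
  · simp only [Set.indicator_of_notMem hS, zero_mul, zero_div]

theorem mem_iff_mem_of_mProb_monomial_curve_eq [DecidableEq X] {n : ℕ} {a : X → ℕ}
    (ha : Set.InjOn (fun k : X → ℕ => ∑ x, a x * k x) {k | ∑ x, k x = n})
    {N : ℝ → ℝ} {T : Set ℝ} (hT : T.Infinite) (hN : ∀ s ∈ T, N s ≠ 0) {S₁ S₂ : Set (X → ℕ)}
    (h : ∀ s ∈ T, mProb n (fun x => s ^ a x / N s) S₁ = mProb n (fun x => s ^ a x / N s) S₂)
    {k : X → ℕ} (hk : ∑ x, k x = n) : k ∈ S₁ ↔ k ∈ S₂ := by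
  have hcoeff : ∀ k ∈ piAntidiag univ n, S₁.indicator (fun k => (Nat.multinomial univ k : ℝ)) k =
      S₂.indicator (fun k => (Nat.multinomial univ k : ℝ)) k := by
    refine Polynomial.coeffs_eq_of_sum_mul_pow_eq (ha.mono fun k hk => by simpa using hk) hT
      fun s hs => ?_
    have := h s hs
    rwa [mProb_monomial_curve, mProb_monomial_curve, div_left_inj' (pow_ne_zero n (hN s hs))] at this
  have hk := hcoeff k (by simpa using hk)
  have hmult : (Nat.multinomial univ k : ℝ) ≠ 0 := Nat.cast_ne_zero.2 (Nat.multinomial_pos _ _).ne'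
  by_cases h₁ : k ∈ S₁ <;> by_cases h₂ : k ∈ S₂ <;> simp_all

end Multinomial

theorem Nat.eq_and_eq_of_add_mul_eq {b x y x' y' : ℕ} (hx : x < b) (hx' : x' < b)
    (h : x + b * y = x' + b * y') : x = x' ∧ y = y' := by
  have hb : 0 < b := by omega
  obtain ⟨hy, hx⟩ := (Nat.div_mod_unique hb).2 ⟨rfl, hx⟩
  obtain ⟨hy', hx'⟩ := (Nat.div_mod_unique hb).2 ⟨h.symm, hx'⟩
  exact ⟨hx.symm.trans hx', hy.symm.trans hy'⟩

def digitExp (n : ℕ) : Fin 2 × Fin 2 → ℕ := fun x => ![![1, 0], ![n + 1, (n + 1) ^ 2]] x.1 x.2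

def digitNorm (n : ℕ) (s : ℝ) : ℝ := ∑ x, s ^ digitExp n x

def digitCurve (n : ℕ) (s : ℝ) : Fin 2 × Fin 2 → ℝ := fun x => s ^ digitExp n x / digitNorm n s

theorem sum_digitExp_mul (n : ℕ) (k : Fin 2 × Fin 2 → ℕ) :
    ∑ x, digitExp n x * k x = k (0, 0) + (n + 1) * (k (1, 0) + (n + 1) * k (1, 1)) := by
  simp [digitExp, Fintype.sum_prod_type]
  ring

theorem injOn_sum_digitExp_mul (n : ℕ) :
    Set.InjOn (fun k => ∑ x, digitExp n x * k x) {k : Fin 2 × Fin 2 → ℕ | ∑ x, k x = n} := by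
  intro k hk k' hk' h
  simp only [Set.mem_ofPred_eq, Fintype.sum_prod_type, Fin.sum_univ_two] at hk hk'
  simp only [sum_digitExp_mul] at h
  obtain ⟨h00, h'⟩ := Nat.eq_and_eq_of_add_mul_eq (by omega) (by omega) h
  obtain ⟨h10, h11⟩ := Nat.eq_and_eq_of_add_mul_eq (by omega) (by omega) h'
  funext x
  fin_cases x <;> simp <;> omega

theorem one_le_digitNorm (n : ℕ) {s : ℝ} (hs : 0 ≤ s) : 1 ≤ digitNorm n s := by
  calc (1 : ℝ) = s ^ digitExp n (0, 1) := by simp [digitExp]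
    _ ≤ digitNorm n s := single_le_sum (fun x _ => pow_nonneg hs _) (mem_univ _)

theorem isProb_digitCurve (n : ℕ) {s : ℝ} (hs : 0 ≤ s) : IsProb (digitCurve n s) := by
  have hN := zero_lt_one.trans_le (one_le_digitNorm n hs)
  refine ⟨fun x => ⟨by unfold digitCurve; positivity, ?_⟩, ?_⟩
  · exact div_le_one_of_le₀ (single_le_sum (fun x _ => pow_nonneg hs _) (mem_univ x)) hN.le
  · simp only [digitCurve, ← sum_div]
    exact div_self hN.ne'

theorem tendsto_digitCurve_sub (n : ℕ) :
    Tendsto (fun s => digitCurve n s (0, 1) - digitCurve n s (1, 0)) (𝓝 0) (𝓝 1) := by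
  have h0 : digitNorm n 0 = 1 := by simp [digitNorm, digitExp, Fintype.sum_prod_type]
  have hN : ContinuousAt (digitNorm n) 0 :=
    (continuous_finsetSum _ fun x _ => continuous_pow _).continuousAt
  have hcont : ContinuousAt (fun s => digitCurve n s (0, 1) - digitCurve n s (1, 0)) 0 := by
    unfold digitCurve; fun_prop (disch := simp [h0])
  simpa [digitCurve, h0, digitExp] using hcont.tendsto

theorem le_of_mProb_superlevel_eq {n : ℕ} {Δ₁ Δ₂ : (Fin 2 × Fin 2 → ℕ) → ℝ}
    (hΔ₂ : ∀ k, ∑ x, k x = n → Δ₂ k ≤ 1)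
    (hequiv : ∀ q : Fin 2 × Fin 2 → ℝ, IsProb q → ∀ t : ℝ, t < q (0, 1) - q (1, 0) →
      mProb n q {k | t ≤ Δ₁ k} = mProb n q {k | t ≤ Δ₂ k})
    {k : Fin 2 × Fin 2 → ℕ} (hk : ∑ x, k x = n) : Δ₂ k ≤ Δ₁ k := by
  by_contra! hlt
  obtain ⟨t, ht₁, ht₂⟩ := exists_between hlt
  set T := {s : ℝ | 0 < s ∧ t < digitCurve n s (0, 1) - digitCurve n s (1, 0)}
  have hT : T.Infinite := by
    have hU := (tendsto_digitCurve_sub n).eventually (lt_mem_nhds (ht₂.trans_le (hΔ₂ k hk)))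
    obtain ⟨u, hu, hsub⟩ := mem_nhdsGT_iff_exists_Ioo_subset.1 (inter_mem_nhdsWithin (Set.Ioi 0) hU)
    exact (Set.Ioo_infinite hu).mono hsub
  have hiff := mem_iff_mem_of_mProb_monomial_curve_eq (S₁ := {k | t ≤ Δ₁ k})
    (S₂ := {k | t ≤ Δ₂ k}) (injOn_sum_digitExp_mul n) hT
    (fun s hs => (zero_lt_one.trans_le (one_le_digitNorm n hs.1.le)).ne')
    (fun s hs => hequiv _ (isProb_digitCurve n hs.1.le) t hs.2) hk
  exact (hiff.2 ht₂.le).not_gt ht₁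

theorem stmt_19_general (n : ℕ)
    (Δ₁ Δ₂ : ((Fin 2 × Fin 2) → ℕ) → ℝ)
    (hΔ₁ : ∀ k, (∑ x, k x) = n → Δ₁ k ∈ Set.Icc (-1:ℝ) 1)
    (hΔ₂ : ∀ k, (∑ x, k x) = n → Δ₂ k ∈ Set.Icc (-1:ℝ) 1)
    (hequiv : ∀ q : Fin 2 × Fin 2 → ℝ, IsProb q → ∀ t : ℝ, t < q (0, 1) - q (1, 0) →
      mProb n q {k | t ≤ Δ₁ k} = mProb n q {k | t ≤ Δ₂ k}) :
    ∀ k : (Fin 2 × Fin 2) → ℕ, (∑ x, k x) = n → Δ₁ k = Δ₂ k := by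
  intro k hk
  exact le_antisymm
    (le_of_mProb_superlevel_eq (fun k hk => (hΔ₁ k hk).2)
      (fun q hq t ht => (hequiv q hq t ht).symm) hk)
    (le_of_mProb_superlevel_eq (fun k hk => (hΔ₂ k hk).2) hequiv hk)

/-- Equivalence-implies-equality Lemma: two equivalent lower β-confidence bounds for
`q ↦ q₀₁ - q₁₀` in the multinomial model coincide on `{k : k₊₊ = n}`. -/
theorem stmt_19 (β : ℝ) (hβ : β ∈ Set.Icc (0:ℝ) 1) (n : ℕ) (hn : 0 < n)
    (Δ₁ Δ₂ : ((Fin 2 × Fin 2) → ℕ) → ℝ)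
    (hΔ₁ : ∀ k, (∑ x, k x) = n → Δ₁ k ∈ Set.Icc (-1:ℝ) 1)
    (hΔ₂ : ∀ k, (∑ x, k x) = n → Δ₂ k ∈ Set.Icc (-1:ℝ) 1)
    (hcb₁ : ∀ q : Fin 2 × Fin 2 → ℝ, IsProb q →
      β ≤ mProb n q {k | Δ₁ k ≤ q (0, 1) - q (1, 0)})
    (hcb₂ : ∀ q : Fin 2 × Fin 2 → ℝ, IsProb q →
      β ≤ mProb n q {k | Δ₂ k ≤ q (0, 1) - q (1, 0)})
    (hequiv : ∀ q : Fin 2 × Fin 2 → ℝ, IsProb q → ∀ t : ℝ, t < q (0, 1) - q (1, 0) →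
      mProb n q {k | t ≤ Δ₁ k} = mProb n q {k | t ≤ Δ₂ k}) :
    ∀ k : (Fin 2 × Fin 2) → ℕ, (∑ x, k x) = n → Δ₁ k = Δ₂ k :=
  stmt_19_general n Δ₁ Δ₂ hΔ₁ hΔ₂ hequiv

end
end
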